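/- Let G be a graph containing exactly one 4-vertex subset that induces a complete graph K4, and let A be a minimal prison-free completion set for G. Then cmd_4(G∪A) consists of exactly one set F, and every pair in A has both of its endpoints in F. -/

import Mathlib

namespace PrisonFreePaper

variable {V : Type*}

/-- The prison graph on 5 vertices: `K₅` minus the two edges `{4,2}` and `{4,3}`
(which share the vertex `4`).  Thus `{0,1,2,3}` is a 4-clique and the vertex `4`
is adjacent exactly to `0` and `1`. -/
def prison : SimpleGraph (Fin 5) where
  Adj a b := a ≠ b ∧ ¬((a = 4 ∧ (b = 2 ∨ b = 3)) ∨ (b = 4 ∧ (a = 2 ∨ a = 3)))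
  symm := by
    constructor
    rintro a b ⟨h1, h2⟩
    exact ⟨h1.symm, by tauto⟩
  loopless := by
    constructor
    rintro a ⟨h, _⟩
    exact h rfl

/-- `P` is a 5-vertex set inducing a subgraph of `G` isomorphic to the prison. -/
def InducesPrison (G : SimpleGraph V) (P : Set V) : Prop :=
  ∃ f : Fin 5 ↪ V, Set.range f = P ∧ ∀ a b, G.Adj (f a) (f b) ↔ prison.Adj a b

/-- `G` is prison-free: no 5-vertex set induces a prison. -/
def PrisonFree (G : SimpleGraph V) : Prop :=
  ¬ ∃ P : Set V, InducesPrison G P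

/-- `P` is the set of classes witnessing that the induced subgraph `G[F]` is
complete multipartite: the classes are nonempty, pairwise disjoint, their union
is `F`, and two vertices of `F` are adjacent iff they lie in different classes. -/
def IsCMP (G : SimpleGraph V) (F : Set V) (P : Set (Set V)) : Prop :=
  (∀ C ∈ P, C.Nonempty ∧ C ⊆ F) ∧
  (⋃₀ P = F) ∧
  (∀ C ∈ P, ∀ D ∈ P, C ≠ D → Disjoint C D) ∧
  (∀ u ∈ F, ∀ v ∈ F, (G.Adj u v ↔ ¬ ∃ C ∈ P, u ∈ C ∧ v ∈ C))

/-- The induced subgraph `G[F]` is complete multipartite. -/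
def CMP (G : SimpleGraph V) (F : Set V) : Prop := ∃ P, IsCMP G F P

/-- The induced subgraph `G[F]` is complete multipartite with at least `p` classes. -/
def CMPAtLeast (G : SimpleGraph V) (F : Set V) (p : ℕ) : Prop :=
  ∃ P, IsCMP G F P ∧ ∃ f : Fin p ↪ Set V, ∀ i, f i ∈ P

/-- `F ∈ cmd_p` of the induced subgraph of `G` on the ground set `W`:
`F` is an inclusion-wise maximal subset of `W` inducing a complete multipartite
graph with at least `p` classes. -/
def Cmd (G : SimpleGraph V) (W : Set V) (p : ℕ) (F : Set V) : Prop :=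
  F ⊆ W ∧ CMPAtLeast G F p ∧
    ∀ F', F' ⊆ W → F ⊆ F' → CMPAtLeast G F' p → F' = F

/-- The neighbourhood of `v` in `G` intersects at most one class of `P`. -/
def MeetsAtMostOneClass (G : SimpleGraph V) (P : Set (Set V)) (v : V) : Prop :=
  ∀ C ∈ P, ∀ D ∈ P, (∃ x ∈ C, G.Adj v x) → (∃ y ∈ D, G.Adj v y) → C = D

/-- The induced subgraph `G[X]`, viewed as a graph on the same vertex set
(only edges with both endpoints in `X` are kept). -/
def inducedOn (G : SimpleGraph V) (X : Set V) : SimpleGraph V where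
  Adj a b := G.Adj a b ∧ a ∈ X ∧ b ∈ X
  symm := by constructor; rintro a b ⟨h, ha, hb⟩; exact ⟨h.symm, hb, ha⟩
  loopless := by constructor; rintro a ⟨h, _⟩; exact G.loopless.1 a h

/-- The set of edges of `G` with both endpoints in `X`, i.e. the edges of `G[X]`. -/
def edgesWithin (G : SimpleGraph V) (X : Set V) : Set (Sym2 V) :=
  (inducedOn G X).edgeSet

/-- `(G,k)` is a yes-instance of Prison-Free Edge Deletion. -/
def DeletionYes (G : SimpleGraph V) (k : ℕ) : Prop :=
  ∃ A : Set (Sym2 V), A ⊆ G.edgeSet ∧ A.Finite ∧ A.ncard ≤ k ∧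
    PrisonFree (G.deleteEdges A)

/-- `P` is a strict supergraph of a prison in `G`: a 5-vertex set whose induced
subgraph is `K₅` or `K₅` minus one edge (at most one non-adjacent pair). -/
def StrictSupPrison (G : SimpleGraph V) (P : Set V) : Prop :=
  P.ncard = 5 ∧ ∃ u v : V, ∀ x ∈ P, ∀ y ∈ P, x ≠ y → ¬ G.Adj x y →
    (x = u ∧ y = v) ∨ (x = v ∧ y = u)

/-- `P` is a supergraph of a prison in `G`: a 5-vertex set whose induced subgraph
contains a prison on `P` as a spanning subgraph, i.e. all non-adjacent pairs in `P`
are among two pairs sharing a common vertex. -/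
def SupPrison (G : SimpleGraph V) (P : Set V) : Prop :=
  P.ncard = 5 ∧ ∃ w u v : V, ∀ x ∈ P, ∀ y ∈ P, x ≠ y → ¬ G.Adj x y →
    (({x, y} : Set V) = {w, u} ∨ ({x, y} : Set V) = {w, v})

/-- Hypothesis (H1): every edge of `G` that does not have both endpoints in `S`
is contained in a strict supergraph of a prison in `G`. -/
def H1 (G : SimpleGraph V) (S : Set V) : Prop :=
  ∀ u v : V, G.Adj u v → ¬(u ∈ S ∧ v ∈ S) →
    ∃ P, StrictSupPrison G P ∧ u ∈ P ∧ v ∈ P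

/-- Hypothesis (H2): every 5-vertex set inducing a prison in `G` contains at least
two edges with both endpoints in `S`. -/
def H2 (G : SimpleGraph V) (S : Set V) : Prop :=
  ∀ P, InducesPrison G P →
    ∃ e₁ e₂ : Sym2 V, e₁ ≠ e₂ ∧ e₁ ∈ edgesWithin G (P ∩ S) ∧ e₂ ∈ edgesWithin G (P ∩ S)

/-- `B`: the edges of `G−S` lying in no triangle of `G−S`. -/
def BSet (G : SimpleGraph V) (S : Set V) : Set (Sym2 V) :=
  {e ∈ edgesWithin G Sᶜ | ¬ ∃ w ∈ Sᶜ, ∀ x ∈ e, G.Adj w x}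

/-- `B_e` for the edge `e = ab` of `G[S]`: the edges of `B` both of whose endpoints
are adjacent in `G` to both `a` and `b`. -/
def BOf (G : SimpleGraph V) (S : Set V) (a b : V) : Set (Sym2 V) :=
  {f ∈ BSet G S | ∀ x ∈ f, G.Adj x a ∧ G.Adj x b}

/-- `V(B_e)`: the set of endpoints of the edges of `B_e`. -/
def BVerts (G : SimpleGraph V) (S : Set V) (a b : V) : Set V :=
  {x | ∃ f ∈ BOf G S a b, x ∈ f}

/-- The graph `G ∪ A` obtained by adding the pairs in `A` as edges. -/
def addEdges (G : SimpleGraph V) (A : Set (Sym2 V)) : SimpleGraph V :=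
  G ⊔ SimpleGraph.fromEdgeSet A

/-- `A` is a prison-free completion set for `G`: a set of non-edges (unordered
pairs of distinct vertices not adjacent in `G`) whose addition makes `G` prison-free. -/
def CompletionSet (G : SimpleGraph V) (A : Set (Sym2 V)) : Prop :=
  (∀ e ∈ A, ¬ e.IsDiag) ∧ (∀ e ∈ A, e ∉ G.edgeSet) ∧ PrisonFree (addEdges G A)

/-- `A` is a minimal prison-free completion set for `G`. -/
def MinCompletionSet (G : SimpleGraph V) (A : Set (Sym2 V)) : Prop :=
  CompletionSet G A ∧ ∀ A' ⊂ A, ¬ CompletionSet G A'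

/-- `A` is a solution to the instance `(G,k)` of Prison-Free Edge Completion:
a prison-free completion set of size at most `k`. -/
def Solution (G : SimpleGraph V) (k : ℕ) (A : Set (Sym2 V)) : Prop :=
  CompletionSet G A ∧ A.Finite ∧ A.ncard ≤ k

/-- `A` is a minimal solution to `(G,k)`: a solution no proper subset of which is a
prison-free completion set. -/
def MinSolution (G : SimpleGraph V) (k : ℕ) (A : Set (Sym2 V)) : Prop :=
  Solution G k A ∧ ∀ A' ⊂ A, ¬ CompletionSet G A'

/-- `K` is a set of 4 vertices inducing a complete graph `K₄` in `G`. -/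
def IsK4 (G : SimpleGraph V) (K : Set V) : Prop :=
  K.ncard = 4 ∧ ∀ u ∈ K, ∀ v ∈ K, u ≠ v → G.Adj u v

/-- The modulator property of the set `S` (output of the sunflower-based
Lemma): for every prison `P` in `G` and every edge set `A ⊆ E(G)` with `|A| ≤ k`,
if deleting `A` from `G[S]` yields a prison-free graph then `A` contains an edge
of `G[P]`. -/
def GoodModulator (G : SimpleGraph V) (k : ℕ) (S : Set V) : Prop :=
  ∀ P : Set V, InducesPrison G P →
    ∀ A : Set (Sym2 V), A ⊆ G.edgeSet → A.Finite → A.ncard ≤ k →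
      PrisonFree ((inducedOn G S).deleteEdges A) →
      ∃ e ∈ A, e ∈ edgesWithin G P

/-- Hypothesis (H3): for every `F' ∈ cmd₃(G−S)` and every inclusion-wise maximal
set `F ⊇ F'` such that `G[F]` is complete multipartite, some vertex outside `F`
has neighbours in at least two classes of `F`. -/
def H3 (G : SimpleGraph V) (S : Set V) : Prop :=
  ∀ F', Cmd G Sᶜ 3 F' → ∀ F : Set V, F' ⊆ F → CMP G F →
    (∀ F'', F ⊆ F'' → CMP G F'' → F'' = F) →
    ∃ v ∉ F, ∃ P, IsCMP G F P ∧
      ∃ C ∈ P, ∃ D ∈ P, C ≠ D ∧ (∃ x ∈ C, G.Adj v x) ∧ ∃ y ∈ D, G.Adj v y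

/-- `F` is an inclusion-wise maximal subset of `W` inducing a complete
multipartite subgraph of `G`. -/
def MaxCMPon (G : SimpleGraph V) (W F : Set V) : Prop :=
  F ⊆ W ∧ CMP G F ∧ ∀ F'', F'' ⊆ W → F ⊆ F'' → CMP G F'' → F'' = F

/-!
Let `F ∈ cmd₄(G ∪ A)` contain the unique `K₄` of `G`. Since `G ∪ A` is prison-free, `F` absorbs
every vertex adjacent to both ends of one of its edges: the non-neighbours in `F` of such a vertex
form at most one class, since in a prison-free graph no vertex outside a `K₄` sees exactly two
of its vertices; so the vertex can join that class. Hence every `K₄` of `G ∪ A` with an edge in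
`F` lies in `F`. Keeping only the pairs of `A` inside `F` still gives a prison-free graph,
because each of its prisons would lie in `F`, where it agrees with `G ∪ A`; by minimality all of
`A` lies in `F`. Then every `K₄` of `G ∪ A` lies in `F`, and a member of `cmd₄(G ∪ A)` is
absorbed by `F` through a `K₄` spanned by four of its classes, so it equals `F`.
-/

instance : DecidableRel prison.Adj := fun a b =>
  inferInstanceAs (Decidable (a ≠ b ∧ ¬((a = 4 ∧ (b = 2 ∨ b = 3)) ∨ (b = 4 ∧ (a = 2 ∨ a = 3)))))

theorem PrisonFree.adj_or_adj {H : SimpleGraph V} (hH : PrisonFree H) {p q r s v : V}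
    (hpq : H.Adj p q) (hpr : H.Adj p r) (hps : H.Adj p s) (hqr : H.Adj q r)
    (hqs : H.Adj q s) (hrs : H.Adj r s) (hvp : H.Adj v p) (hvq : H.Adj v q)
    (hvr : v ≠ r) (hvs : v ≠ s) : H.Adj v r ∨ H.Adj v s := by
  by_contra! hv
  have hinj : Function.Injective ![p, q, r, s, v] := by
    have := hpq.ne; have := hpr.ne; have := hps.ne; have := hqr.ne; have := hqs.ne
    have := hrs.ne; have := hvp.ne; have := hvq.ne
    intro i j hij
    fin_cases i <;> fin_cases j <;> simp_all
  refine hH ⟨_, ⟨_, hinj⟩, rfl, fun a b => ?_⟩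
  have := hpq.symm; have := hpr.symm; have := hps.symm; have := hqr.symm; have := hqs.symm
  have := hrs.symm; have := hvp.symm; have := hvq.symm
  have : ¬ H.Adj r v := fun h => hv.1 h.symm
  have : ¬ H.Adj s v := fun h => hv.2 h.symm
  fin_cases a <;> fin_cases b <;> simp_all [prison]

theorem addEdges_adj {G : SimpleGraph V} {A : Set (Sym2 V)} {u w : V} :
    (addEdges G A).Adj u w ↔ G.Adj u w ∨ (s(u, w) ∈ A ∧ u ≠ w) := by
  simp [addEdges]

theorem addEdges_mono (G : SimpleGraph V) {A B : Set (Sym2 V)} (h : A ⊆ B) :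
    addEdges G A ≤ addEdges G B :=
  sup_le_sup_left (SimpleGraph.fromEdgeSet_mono h) G

theorem le_addEdges (G : SimpleGraph V) (A : Set (Sym2 V)) : G ≤ addEdges G A := le_sup_left

theorem exists_apply_notMem_of_card_lt {α : Type*} {n : ℕ} (g : Fin n ↪ α)
    (s : Finset α) (hs : s.card < n) : ∃ i, g i ∉ s := by
  by_contra! h
  obtain ⟨i, -, j, -, hij, hg⟩ := Finset.exists_ne_map_eq_of_card_lt_of_maps_to
    (s := Finset.univ) (by simpa using hs) (fun i _ => h i)
  exact hij (g.injective hg)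

theorem isK4_range {H : SimpleGraph V} {φ : Fin 4 → V} (h : ∀ i j, i ≠ j → H.Adj (φ i) (φ j)) :
    IsK4 H (Set.range φ) := by
  refine ⟨?_, ?_⟩
  · rw [Set.ncard_range_of_injective]
    · simp
    · intro i j hij
      by_contra hne
      exact (h i j hne).ne hij
  · rintro _ ⟨i, rfl⟩ _ ⟨j, rfl⟩ hne
    exact h i j (fun hij => hne (hij ▸ rfl))

theorem exists_mem_insert_insert_sdiff_iff {P : Set (Set V)} {N : Set V} (hN : N = ∅ ∨ N ∈ P)
    {v u w : V} (hu : u ≠ v) (hw : w ≠ v) :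
    (∃ C ∈ insert (insert v N) (P \ {N}), u ∈ C ∧ w ∈ C) ↔ ∃ C ∈ P, u ∈ C ∧ w ∈ C := by
  constructor
  · rintro ⟨C, rfl | hC, huC, hwC⟩
    · rcases hN with rfl | hN
      · simp_all
      · exact ⟨_, hN, huC.resolve_left hu, hwC.resolve_left hw⟩
    · exact ⟨C, hC.1, huC, hwC⟩
  · rintro ⟨C, hC, huC, hwC⟩
    by_cases hCN : C = N
    · exact ⟨insert v N, Set.mem_insert _ _, Or.inr (hCN ▸ huC), Or.inr (hCN ▸ hwC)⟩
    · exact ⟨C, Or.inr ⟨hC, hCN⟩, huC, hwC⟩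

namespace IsCMP

variable {H : SimpleGraph V} {F : Set V} {P : Set (Set V)} {g : Fin 4 ↪ Set V} {v : V}

theorem subset (hP : IsCMP H F P) {C : Set V} (hC : C ∈ P) : C ⊆ F := (hP.1 C hC).2

theorem exists_mem (hP : IsCMP H F P) {u : V} (hu : u ∈ F) : ∃ C ∈ P, u ∈ C := by
  rwa [← hP.2.1, Set.mem_sUnion] at hu

theorem eq_of_mem (hP : IsCMP H F P) {C D : Set V} (hC : C ∈ P) (hD : D ∈ P) {u : V}
    (huC : u ∈ C) (huD : u ∈ D) : C = D := by
  by_contra h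
  exact Set.disjoint_left.mp (hP.2.2.1 C hC D hD h) huC huD

theorem adj_iff (hP : IsCMP H F P) {C D : Set V} (hC : C ∈ P) (hD : D ∈ P) {u w : V}
    (hu : u ∈ C) (hw : w ∈ D) : H.Adj u w ↔ C ≠ D := by
  rw [hP.2.2.2 u (hP.subset hC hu) w (hP.subset hD hw), not_iff_not]
  constructor
  · rintro ⟨E, hE, huE, hwE⟩
    exact (hP.eq_of_mem hC hE hu huE).trans (hP.eq_of_mem hE hD hwE hw)
  · rintro rfl
    exact ⟨C, hC, hu, hw⟩

theorem adj_or_adj (hP : IsCMP H F P) {p q r : V} (hp : p ∈ F) (hq : q ∈ F) (hr : r ∈ F)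
    (hpr : H.Adj p r) : H.Adj p q ∨ H.Adj q r := by
  obtain ⟨Cp, hCp, hpC⟩ := hP.exists_mem hp
  obtain ⟨Cq, hCq, hqC⟩ := hP.exists_mem hq
  obtain ⟨Cr, hCr, hrC⟩ := hP.exists_mem hr
  rw [hP.adj_iff hCp hCq hpC hqC, hP.adj_iff hCq hCr hqC hrC]
  rw [hP.adj_iff hCp hCr hpC hrC] at hpr
  by_contra! h
  exact hpr (h.1.trans h.2)

theorem exists_adj_adj_adj (hP : IsCMP H F P) (hg : ∀ i, g i ∈ P)
    {s t r : V} (hs : s ∈ F) (ht : t ∈ F) (hr : r ∈ F) :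
    ∃ z ∈ F, H.Adj z s ∧ H.Adj z t ∧ H.Adj z r := by
  classical
  obtain ⟨Cs, hCs, hsC⟩ := hP.exists_mem hs
  obtain ⟨Ct, hCt, htC⟩ := hP.exists_mem ht
  obtain ⟨Cr, hCr, hrC⟩ := hP.exists_mem hr
  obtain ⟨i, hi⟩ := exists_apply_notMem_of_card_lt g {Cs, Ct, Cr}
    (Finset.card_le_three.trans_lt (by norm_num))
  obtain ⟨z, hz⟩ := (hP.1 _ (hg i)).1
  simp only [Finset.mem_insert, Finset.mem_singleton, not_or] at hi
  exact ⟨z, hP.subset (hg i) hz, (hP.adj_iff (hg i) hCs hz hsC).2 hi.1,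
    (hP.adj_iff (hg i) hCt hz htC).2 hi.2.1, (hP.adj_iff (hg i) hCr hz hrC).2 hi.2.2⟩

theorem exists_adj_adj_of_adj (hP : IsCMP H F P) (hg : ∀ i, g i ∈ P)
    {s t : V} (hs : s ∈ F) (ht : t ∈ F) :
    ∃ z₁ ∈ F, ∃ z₂ ∈ F, H.Adj z₁ z₂ ∧ H.Adj z₁ s ∧ H.Adj z₁ t ∧ H.Adj z₂ s ∧ H.Adj z₂ t := by
  obtain ⟨z₁, hz₁, hz₁s, hz₁t, -⟩ := hP.exists_adj_adj_adj hg hs ht ht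
  obtain ⟨z₂, hz₂, hz₂s, hz₂t, hz₂z₁⟩ := hP.exists_adj_adj_adj hg hs ht hz₁
  exact ⟨z₁, hz₁, z₂, hz₂, hz₂z₁.symm, hz₁s, hz₁t, hz₂s, hz₂t⟩

theorem adj_or_adj_of_adj_of_adj (hH : PrisonFree H) (hP : IsCMP H F P) (hg : ∀ i, g i ∈ P)
    (hv : v ∉ F) {x y : V} (hx : x ∈ F) (hy : y ∈ F) (hxy : H.Adj x y) (hvx : H.Adj v x)
    (hvy : H.Adj v y) {a u : V} (ha : a ∈ F) (hu : u ∈ F) (hau : H.Adj a u) :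
    H.Adj v a ∨ H.Adj v u := by
  have hne : ∀ {w}, w ∈ F → v ≠ w := fun hw h => hv (h ▸ hw)
  wlog hax : ¬ H.Adj a x generalizing x y a u
  · rw [not_not] at hax
    by_cases hay : H.Adj a y
    · by_cases hux : H.Adj u x
      · by_cases huy : H.Adj u y
        · exact hH.adj_or_adj hxy hax.symm hux.symm hay.symm huy.symm hau hvx hvy
            (hne ha) (hne hu)
        · exact (this hy hx hxy.symm hvy hvx hu ha hau.symm huy).symm
      · exact (this hx hy hxy hvx hvy hu ha hau.symm hux).symm
    · exact this hy hx hxy.symm hvy hvx ha hu hau hay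
  -- `a` lies in the class of `x`, so everything adjacent to `x` is adjacent to `a`
  have hxu : H.Adj x u := (hP.adj_or_adj ha hx hu hau).resolve_left hax
  have hay : H.Adj a y := (hP.adj_or_adj hx ha hy hxy).resolve_left fun h => hax h.symm
  have adj_a : ∀ {z}, z ∈ F → H.Adj z x → H.Adj z a := fun hz hzx =>
    (hP.adj_or_adj hz ha hx hzx).resolve_right hax
  by_cases huy : H.Adj u y
  · obtain ⟨z, hz, hzx, hzy, hzu⟩ := hP.exists_adj_adj_adj hg hx hy hu
    rcases hH.adj_or_adj hxy hxu hzx.symm huy.symm hzy.symm hzu.symm hvx hvy (hne hu) (hne hz)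
      with hvu | hvz
    · exact Or.inr hvu
    · exact hH.adj_or_adj hzy.symm hay.symm huy.symm (adj_a hz hzx) hzu hau hvy hvz
        (hne ha) (hne hu)
  · have adj_u : ∀ {z}, z ∈ F → H.Adj z y → H.Adj z u := fun hz hzy =>
      (hP.adj_or_adj hz hu hy hzy).resolve_right huy
    have step : ∀ {z z'}, z ∈ F → z' ∈ F → H.Adj z z' → H.Adj z x → H.Adj z y →
        H.Adj z' x → H.Adj z' y → H.Adj v z → H.Adj v a ∨ H.Adj v u := by
      intro z z' hz hz' hzz' hzx hzy hz'x hz'y hvz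
      rcases hH.adj_or_adj hzx.symm hxu hz'x.symm (adj_u hz hzy) hzz' (adj_u hz' hz'y).symm
        hvx hvz (hne hu) (hne hz') with hvu | hvz'
      · exact Or.inr hvu
      · exact hH.adj_or_adj hzz' (adj_a hz hzx) (adj_u hz hzy) (adj_a hz' hz'x)
          (adj_u hz' hz'y) hau hvz hvz' (hne ha) (hne hu)
    obtain ⟨z₁, hz₁, z₂, hz₂, h₁₂, h₁x, h₁y, h₂x, h₂y⟩ := hP.exists_adj_adj_of_adj hg hx hy
    rcases hH.adj_or_adj hxy h₁x.symm h₂x.symm h₁y.symm h₂y.symm h₁₂ hvx hvy (hne hz₁) (hne hz₂)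
      with hv₁ | hv₂
    · exact step hz₁ hz₂ h₁₂ h₁x h₁y h₂x h₂y hv₁
    · exact step hz₂ hz₁ h₁₂.symm h₂x h₂y h₁x h₁y hv₂

theorem not_adj_of_not_adj (hH : PrisonFree H) (hP : IsCMP H F P) (hg : ∀ i, g i ∈ P)
    (hv : v ∉ F) {x y : V} (hx : x ∈ F) (hy : y ∈ F) (hxy : H.Adj x y) (hvx : H.Adj v x)
    (hvy : H.Adj v y) {a c : V} (ha : a ∈ F) (hc : c ∈ F) (hva : ¬ H.Adj v a)
    (hac : ¬ H.Adj a c) : ¬ H.Adj v c := by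
  rcases eq_or_ne a c with rfl | hne
  · exact hva
  intro hvc
  obtain ⟨z₁, hz₁, z₂, hz₂, h₁₂, h₁a, h₁c, h₂a, h₂c⟩ := hP.exists_adj_adj_of_adj hg ha hc
  have hv₁ := (hP.adj_or_adj_of_adj_of_adj hH hg hv hx hy hxy hvx hvy hz₁ ha h₁a).resolve_right hva
  have hv₂ := (hP.adj_or_adj_of_adj_of_adj hH hg hv hx hy hxy hvx hvy hz₂ ha h₂a).resolve_right hva
  rcases hH.adj_or_adj h₁₂ h₁c hv₁.symm h₂c hv₂.symm hvc.symm h₁a.symm h₂a.symm hne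
    (fun h => hv (h ▸ ha)) with h | h
  · exact hac h
  · exact hva h.symm

theorem nonAdj_eq_empty_or_mem (hH : PrisonFree H) (hP : IsCMP H F P) (hg : ∀ i, g i ∈ P)
    (hv : v ∉ F) {x y : V} (hx : x ∈ F) (hy : y ∈ F) (hxy : H.Adj x y) (hvx : H.Adj v x)
    (hvy : H.Adj v y) : {u ∈ F | ¬ H.Adj v u} = ∅ ∨ {u ∈ F | ¬ H.Adj v u} ∈ P := by
  rcases Set.eq_empty_or_nonempty {u ∈ F | ¬ H.Adj v u} with h | ⟨a, ha, hva⟩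
  · exact Or.inl h
  obtain ⟨C, hC, haC⟩ := hP.exists_mem ha
  suffices hCN : C = {u ∈ F | ¬ H.Adj v u} from Or.inr (hCN ▸ hC)
  ext c
  constructor
  · intro hcC
    refine ⟨hP.subset hC hcC, hP.not_adj_of_not_adj hH hg hv hx hy hxy hvx hvy ha
      (hP.subset hC hcC) hva ?_⟩
    rw [hP.adj_iff hC hC haC hcC]
    exact not_not_intro rfl
  · rintro ⟨hc, hvc⟩
    obtain ⟨D, hD, hcD⟩ := hP.exists_mem hc
    by_contra hcC
    have hac : H.Adj a c := (hP.adj_iff hC hD haC hcD).2 fun h => hcC (h ▸ hcD)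
    rcases hP.adj_or_adj_of_adj_of_adj hH hg hv hx hy hxy hvx hvy ha hc hac with h | h
    · exact hva h
    · exact hvc h

-- For `N = ∅` the vertex `v` forms a class of its own, as then `P \ {N} = P`.
theorem insert_of_nonAdj (hP : IsCMP H F P) (hv : v ∉ F) {N : Set V} (hN : N = ∅ ∨ N ∈ P)
    (hvN : ∀ u ∈ F, H.Adj v u ↔ u ∉ N) :
    IsCMP H (insert v F) (insert (insert v N) (P \ {N})) := by
  have hNF : N ⊆ F := by
    rcases hN with rfl | hN
    exacts [Set.empty_subset _, hP.subset hN]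
  have hvC : ∀ C ∈ P, v ∉ C := fun C hC h => hv (hP.subset hC h)
  have hsame_v : ∀ w, (∃ C ∈ insert (insert v N) (P \ {N}), v ∈ C ∧ w ∈ C) ↔ w = v ∨ w ∈ N := by
    intro w
    constructor
    · rintro ⟨C, rfl | hC, hvC', hwC⟩
      · exact hwC
      · exact absurd hvC' (hvC C hC.1)
    · exact fun hw => ⟨insert v N, Set.mem_insert _ _, Set.mem_insert _ _, hw⟩
  refine ⟨?_, ?_, ?_, ?_⟩
  · rintro C (rfl | ⟨hC, -⟩)
    · exact ⟨⟨v, Set.mem_insert _ _⟩, Set.insert_subset_insert hNF⟩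
    · exact ⟨(hP.1 C hC).1, (hP.subset hC).trans (Set.subset_insert _ _)⟩
  · rw [Set.sUnion_insert, Set.insert_union, ← Set.sUnion_insert, Set.insert_sdiff_singleton,
      Set.sUnion_insert, hP.2.1, Set.union_eq_right.2 hNF]
  · have hdisj : ∀ D ∈ P \ {N}, Disjoint (insert v N) D := by
      rintro D ⟨hD, hDN⟩
      refine Set.disjoint_insert_left.2 ⟨hvC D hD, ?_⟩
      rcases hN with rfl | hN
      · exact Set.empty_disjoint _
      · exact hP.2.2.1 N hN D hD (Ne.symm hDN)
    rintro C (rfl | hC) D (rfl | hD) hCD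
    · exact absurd rfl hCD
    · exact hdisj D hD
    · exact (hdisj C hC).symm
    · exact hP.2.2.1 C hC.1 D hD.1 hCD
  · simp only [Set.forall_mem_insert]
    refine ⟨⟨by simp, fun w hw => ?_⟩, fun u hu => ⟨?_, fun w hw => ?_⟩⟩
    · rw [hsame_v, hvN w hw, or_iff_right fun h : w = v => hv (h ▸ hw)]
    · rw [H.adj_comm, hvN u hu,
        ← or_iff_right (a := u = v) (b := u ∈ N) fun h => hv (h ▸ hu), ← hsame_v]
      simp only [and_comm]
    · rw [exists_mem_insert_insert_sdiff_iff hN (ne_of_mem_of_not_mem hu hv)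
        (ne_of_mem_of_not_mem hw hv)]
      exact hP.2.2.2 u hu w hw

end IsCMP

section Absorption

variable {H : SimpleGraph V} {F : Set V} {v : V}

theorem CMPAtLeast.insert_of_adj_of_adj (hH : PrisonFree H) (hF : CMPAtLeast H F 4)
    (hv : v ∉ F) {x y : V} (hx : x ∈ F) (hy : y ∈ F) (hxy : H.Adj x y) (hvx : H.Adj v x)
    (hvy : H.Adj v y) : CMPAtLeast H (insert v F) 4 := by
  classical
  obtain ⟨P, hP, g, hg⟩ := hF
  set N := {u ∈ F | ¬ H.Adj v u}
  have hN := hP.nonAdj_eq_empty_or_mem hH hg hv hx hy hxy hvx hvy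
  have hvg : ∀ i, insert v N ≠ g i := fun i h => hv (hP.subset (hg i) (h ▸ Set.mem_insert _ _))
  refine ⟨_, hP.insert_of_nonAdj hv hN fun u hu => by simp [hu],
    ⟨fun i => if g i = N then insert v N else g i, fun i j hij => ?_⟩, fun i => ?_⟩
  · dsimp only at hij
    split_ifs at hij with hi hj hj
    · exact g.injective (hi.trans hj.symm)
    · exact absurd hij (hvg j)
    · exact absurd hij.symm (hvg i)
    · exact g.injective hij
  · show (if g i = N then insert v N else g i) ∈ _
    split_ifs with hi
    · exact Set.mem_insert _ _
    · exact Or.inr ⟨hg i, hi⟩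

theorem Cmd.mem_of_adj_of_adj {W : Set V} (hH : PrisonFree H) (hF : Cmd H W 4 F) (hvW : v ∈ W)
    {x y : V} (hx : x ∈ F) (hy : y ∈ F) (hxy : H.Adj x y) (hvx : H.Adj v x)
    (hvy : H.Adj v y) : v ∈ F := by
  by_contra hv
  have := hF.2.2 (insert v F) (Set.insert_subset hvW hF.1) (Set.subset_insert v F)
    (hF.2.1.insert_of_adj_of_adj hH hv hx hy hxy hvx hvy)
  exact hv (this ▸ Set.mem_insert v F)

theorem Cmd.subset_of_isClique {W : Set V} (hH : PrisonFree H) (hF : Cmd H W 4 F) {Q : Set V}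
    (hQ : H.IsClique Q) (hQW : Q ⊆ W) {x y : V} (hx : x ∈ Q ∩ F) (hy : y ∈ Q ∩ F) (hxy : x ≠ y) :
    Q ⊆ F := by
  intro w hw
  by_cases hwx : w = x
  · exact hwx ▸ hx.2
  by_cases hwy : w = y
  · exact hwy ▸ hy.2
  exact hF.mem_of_adj_of_adj hH (hQW hw) hx.2 hy.2 (hQ hx.1 hy.1 hxy) (hQ hw hx.1 hwx)
    (hQ hw hy.1 hwy)

end Absorption

section Components

variable {H : SimpleGraph V}

theorem isCMP_singletons_of_isClique {K : Set V} (hK : H.IsClique K) :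
    IsCMP H K ((fun x => ({x} : Set V)) '' K) := by
  refine ⟨?_, ?_, ?_, fun u hu w hw => ?_⟩
  · rintro _ ⟨x, hx, rfl⟩
    exact ⟨Set.singleton_nonempty x, Set.singleton_subset_iff.2 hx⟩
  · simp
  · rintro _ ⟨x, -, rfl⟩ _ ⟨y, -, rfl⟩ hxy
    exact Set.disjoint_singleton.2 fun h => hxy (h ▸ rfl)
  · simp only [Set.mem_image, exists_exists_and_eq_and, Set.mem_singleton_iff]
    exact ⟨fun h ⟨x, _, hux, hwx⟩ => h.ne (hux.trans hwx.symm),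
      fun h => hK hu hw fun huw => h ⟨u, hu, rfl, huw.symm⟩⟩

theorem IsK4.cmpAtLeast {K : Set V} (hK : IsK4 H K) : CMPAtLeast H K 4 := by
  have hcard : Nat.card K = 4 := by rw [Nat.card_coe_set_eq, hK.1]
  have : Finite K := Nat.finite_of_card_ne_zero (by omega)
  let e : Fin 4 ↪ K := (finCongr hcard.symm).toEmbedding.trans (Finite.equivFin K).symm.toEmbedding
  exact ⟨_, isCMP_singletons_of_isClique hK.2,
    ⟨fun i => {(e i : V)}, fun i j h => e.injective (Subtype.ext (Set.singleton_injective h))⟩,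
    fun i => ⟨e i, (e i).2, rfl⟩⟩

theorem IsK4.mono {G : SimpleGraph V} {K : Set V} (hGH : G ≤ H) (hK : IsK4 G K) : IsK4 H K :=
  ⟨hK.1, fun u hu w hw huw => hGH (hK.2 u hu w hw huw)⟩

theorem CMPAtLeast.exists_cmd [Finite V] {W K : Set V} {p : ℕ} (hK : CMPAtLeast H K p)
    (hKW : K ⊆ W) : ∃ F, K ⊆ F ∧ Cmd H W p F := by
  obtain ⟨F, hKF, hmax⟩ :=
    (Set.toFinite {F | F ⊆ W ∧ CMPAtLeast H F p}).exists_le_maximal ⟨hKW, hK⟩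
  exact ⟨F, hKF, hmax.1.1, hmax.1.2,
    fun F' hF'W hFF' hF' => (hmax.2 ⟨hF'W, hF'⟩ hFF').antisymm hFF'⟩

theorem CMPAtLeast.exists_isK4 {F : Set V} (hF : CMPAtLeast H F 4) :
    ∃ Q ⊆ F, IsK4 H Q ∧ ∀ w ∈ F, ∃ x ∈ Q, ∃ y ∈ Q, H.Adj x y ∧ H.Adj w x ∧ H.Adj w y := by
  classical
  obtain ⟨P, hP, g, hg⟩ := hF
  choose q hq using fun i => (hP.1 _ (hg i)).1
  have hadj : ∀ i j, i ≠ j → H.Adj (q i) (q j) := fun i j hij =>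
    (hP.adj_iff (hg i) (hg j) (hq i) (hq j)).2 (g.injective.ne hij)
  refine ⟨Set.range q, Set.range_subset_iff.2 fun i => hP.subset (hg i) (hq i), isK4_range hadj,
    fun w hw => ?_⟩
  obtain ⟨C, hC, hwC⟩ := hP.exists_mem hw
  obtain ⟨i, hi⟩ := exists_apply_notMem_of_card_lt g {C} (by simp)
  obtain ⟨j, hj⟩ := exists_apply_notMem_of_card_lt g {C, g i}
    (Finset.card_le_two.trans_lt (by norm_num))
  simp only [Finset.mem_insert, Finset.mem_singleton, not_or] at hi hj
  exact ⟨q i, ⟨i, rfl⟩, q j, ⟨j, rfl⟩, hadj i j fun h => hj.2 (h ▸ rfl),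
    (hP.adj_iff hC (hg i) hwC (hq i)).2 (Ne.symm hi),
    (hP.adj_iff hC (hg j) hwC (hq j)).2 (Ne.symm hj.1)⟩

theorem Cmd.eq_of_forall_isK4_subset {W F F' : Set V} (hH : PrisonFree H) (hF : Cmd H W 4 F)
    (hF' : Cmd H W 4 F') (hK4 : ∀ Q, IsK4 H Q → Q ⊆ F) : F' = F := by
  obtain ⟨Q, -, hQ, hQadj⟩ := hF'.2.1.exists_isK4
  have hF'F : F' ⊆ F := fun w hw => by
    obtain ⟨x, hx, y, hy, hxy, hwx, hwy⟩ := hQadj w hw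
    exact hF.mem_of_adj_of_adj hH (hF'.1 hw) (hK4 Q hQ hx) (hK4 Q hQ hy) hxy hwx hwy
  exact (hF'.2.2 F hF.1 hF'F hF.2.1).symm

end Components

section Completion

variable {G H : SimpleGraph V} {A B : Set (Sym2 V)} {F : Set V}

theorem isK4_subset_of_addEdges (hH : PrisonFree H) (hF : Cmd H Set.univ 4 F)
    (hGB : addEdges G B ≤ H) (hGF : ∀ K, IsK4 G K → K ⊆ F) (hBF : ∀ e ∈ B, ∀ z ∈ e, z ∈ F)
    {Q : Set V} (hQ : IsK4 (addEdges G B) Q) : Q ⊆ F := by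
  by_cases hQG : IsK4 G Q
  · exact hGF Q hQG
  obtain ⟨p, hp, q, hq, hpq, hGpq⟩ : ∃ p ∈ Q, ∃ q ∈ Q, p ≠ q ∧ ¬ G.Adj p q := by
    by_contra! h
    exact hQG ⟨hQ.1, h⟩
  have hB : s(p, q) ∈ B := ((addEdges_adj.1 (hQ.2 p hp q hq hpq)).resolve_left hGpq).1
  exact hF.subset_of_isClique hH (SimpleGraph.IsClique.mono hGB hQ.2) (Set.subset_univ Q)
    ⟨hp, hBF _ hB p (Sym2.mem_mk_left p q)⟩ ⟨hq, hBF _ hB q (Sym2.mem_mk_right p q)⟩ hpq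

theorem addEdges_restrict_adj_iff {u w : V} (hu : u ∈ F) (hw : w ∈ F) :
    (addEdges G {e ∈ A | ∀ z ∈ e, z ∈ F}).Adj u w ↔ (addEdges G A).Adj u w := by
  simp only [addEdges_adj, Set.mem_ofPred_eq, Sym2.mem_iff, forall_eq_or_imp, forall_eq]
  tauto

theorem prisonFree_addEdges_restrict (hH : PrisonFree (addEdges G A))
    (hF : Cmd (addEdges G A) Set.univ 4 F) (hGF : ∀ K, IsK4 G K → K ⊆ F) :
    PrisonFree (addEdges G {e ∈ A | ∀ z ∈ e, z ∈ F}) := by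
  rintro ⟨-, f, rfl, hf⟩
  have hle := addEdges_mono G (A := {e ∈ A | ∀ z ∈ e, z ∈ F}) fun e he => he.1
  have hQF := isK4_subset_of_addEdges hH hF hle hGF (fun e he => he.2)
    (isK4_range (φ := fun i : Fin 4 => f i.castSucc) fun i j hij =>
      (hf _ _).2 (by revert i j; decide))
  have hfF : ∀ i, f i ∈ F := by
    intro i
    induction i using Fin.lastCases with
    | cast i => exact hQF ⟨i, rfl⟩
    | last =>
      exact hF.mem_of_adj_of_adj hH (Set.mem_univ _) (hQF ⟨0, rfl⟩) (hQF ⟨1, rfl⟩)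
        (hle ((hf 0 1).2 (by decide))) (hle ((hf _ 0).2 (by decide)))
        (hle ((hf _ 1).2 (by decide)))
  exact hH ⟨_, f, rfl, fun a b => (addEdges_restrict_adj_iff (hfF a) (hfF b)).symm.trans (hf a b)⟩

end Completion

/-- If `G` has exactly one 4-vertex set inducing `K₄` and `A` is a
minimal prison-free completion set for `G`, then `cmd₄(G ∪ A)` consists of exactly
one set `F` and every pair of `A` has both endpoints in `F`. -/
theorem minimal_completion_single_component {V : Type*} [Fintype V]
    (G : SimpleGraph V) (hK : ∃! K : Set V, IsK4 G K)
    (A : Set (Sym2 V)) (hA : MinCompletionSet G A) :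
    ∃ F : Set V, Cmd (addEdges G A) Set.univ 4 F ∧
      (∀ F' : Set V, Cmd (addEdges G A) Set.univ 4 F' → F' = F) ∧
      ∀ e ∈ A, ∀ x : V, x ∈ e → x ∈ F := by
  obtain ⟨⟨hdiag, hnonedge, hH⟩, hmin⟩ := hA
  obtain ⟨K, hK, hKuniq⟩ := hK
  obtain ⟨F, hKF, hF⟩ := (hK.mono (le_addEdges G A)).cmpAtLeast.exists_cmd (Set.subset_univ K)
  have hGF : ∀ K', IsK4 G K' → K' ⊆ F := fun K' hK' => hKuniq K' hK' ▸ hKF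
  have hAF : ∀ e ∈ A, ∀ z ∈ e, z ∈ F := by
    intro e he z hz
    by_contra hzF
    exact hmin {e ∈ A | ∀ z ∈ e, z ∈ F} ⟨fun e he => he.1, fun h => hzF ((h he).2 z hz)⟩
      ⟨fun e he => hdiag e he.1, fun e he => hnonedge e he.1,
        prisonFree_addEdges_restrict hH hF hGF⟩
  exact ⟨F, hF, fun F' hF' => Cmd.eq_of_forall_isK4_subset hH hF hF'
    fun Q hQ => isK4_subset_of_addEdges hH hF le_rfl hGF hAF hQ, hAF⟩

end PrisonFreePaper
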